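/- Let χ : [0,∞) → [0,1] be smooth with χ = 1 on [0, K₁], χ = 0 on [K₂, ∞), and χ' < 0 on (K₁, K₂), where r ≤ K₁ < K₂. Let H : ℝ^m → ℝ be C¹ satisfying 0 < μH(z) ≤ z_I·H_{z_I}(z) for |z_I| ≥ r (μ > 1), and let ρ ≥ max_{K₁ ≤ |z_I| ≤ K₂} |H(z)|/|z_I|^μ. Define H_K(z) = χ(|z_I|)H(z) + (1 − χ(|z_I|))ρ|z_I|^μ. Then 0 < μH_K(z) ≤ z_I·(H_K)_{z_I}(z) for all z with |z_I| ≥ r. -/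

import Mathlib

theorem stmt_15 (d e : ℕ) (μ r K₁ K₂ ρ : ℝ) (hμ : 1 < μ)
    (hr : 0 < r) (hrK : r ≤ K₁) (hK : K₁ < K₂)
    (H : EuclideanSpace ℝ (Fin d) × EuclideanSpace ℝ (Fin e) → ℝ)
    (hH : ContDiff ℝ 1 H)
    (hsup : ∀ z : EuclideanSpace ℝ (Fin d) × EuclideanSpace ℝ (Fin e),
      r ≤ ‖z.1‖ → 0 < μ * H z ∧ μ * H z ≤ fderiv ℝ H z (z.1, 0))
    (χ : ℝ → ℝ) (hχ : ContDiff ℝ (⊤ : ℕ∞) χ)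
    (hχ01 : ∀ t : ℝ, 0 ≤ χ t ∧ χ t ≤ 1)
    (hχ1 : ∀ t ≤ K₁, χ t = 1) (hχ0 : ∀ t, K₂ ≤ t → χ t = 0)
    (hχ' : ∀ t ∈ Set.Ioo K₁ K₂, deriv χ t < 0)
    (hρ : ∀ z : EuclideanSpace ℝ (Fin d) × EuclideanSpace ℝ (Fin e),
      K₁ ≤ ‖z.1‖ → ‖z.1‖ ≤ K₂ → |H z| ≤ ρ * ‖z.1‖ ^ μ) :
    ∀ z : EuclideanSpace ℝ (Fin d) × EuclideanSpace ℝ (Fin e), r ≤ ‖z.1‖ →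
      0 < μ * (χ ‖z.1‖ * H z + (1 - χ ‖z.1‖) * ρ * ‖z.1‖ ^ μ) ∧
      μ * (χ ‖z.1‖ * H z + (1 - χ ‖z.1‖) * ρ * ‖z.1‖ ^ μ)
        ≤ fderiv ℝ (fun w : EuclideanSpace ℝ (Fin d) × EuclideanSpace ℝ (Fin e) =>
            χ ‖w.1‖ * H w + (1 - χ ‖w.1‖) * ρ * ‖w.1‖ ^ μ) z (z.1, 0) := by
  intro z hz
  have hμ0 : (0:ℝ) < μ := lt_trans one_pos hμ
  have ht0 : (0:ℝ) < ‖z.1‖ := lt_of_lt_of_le hr hz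
  set t0 := ‖z.1‖ with ht0def
  have ht0ne : t0 ≠ 0 := ne_of_gt ht0
  have hz1 : z.1 ≠ 0 := by
    intro h
    rw [ht0def, h, norm_zero] at ht0
    exact lt_irrefl 0 ht0
  have hK1 : 0 < K₁ := lt_of_lt_of_le hr hrK
  -- positivity of ρ
  have hρpos : 0 < ρ := by
    set z' : EuclideanSpace ℝ (Fin d) × EuclideanSpace ℝ (Fin e) :=
      ((K₁ / t0) • z.1, z.2) with hz'
    have hn : ‖z'.1‖ = K₁ := by
      rw [hz']
      simp only [norm_smul, Real.norm_eq_abs, abs_of_pos (div_pos hK1 ht0)]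
      field_simp
      exact ht0def.symm
    have h1 := (hsup z' (by rw [hn]; exact hrK)).1
    have h2 := hρ z' (le_of_eq hn.symm) (by rw [hn]; exact le_of_lt hK)
    rw [hn] at h2
    have hKμ : 0 < K₁ ^ μ := Real.rpow_pos_of_pos hK1 μ
    have hz'pos : 0 < H z' := by
      by_contra h
      push_neg at h
      nlinarith [mul_nonpos_of_nonneg_of_nonpos hμ0.le h]
    by_contra h
    push_neg at h
    have : ρ * K₁ ^ μ ≤ 0 := mul_nonpos_of_nonpos_of_nonneg h hKμ.le
    linarith [le_abs_self (H z')]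
  have hP : 0 < ρ * t0 ^ μ := mul_pos hρpos (Real.rpow_pos_of_pos ht0 μ)
  have hA := hsup z hz
  have hApos : 0 < H z := by nlinarith [hA.1]
  have hχz := hχ01 t0
  -- sign of deriv χ term
  have hS : 0 ≤ deriv χ t0 * t0 * (H z - ρ * t0 ^ μ) := by
    rcases le_or_gt t0 K₁ with h1 | h1
    · have : deriv χ t0 = 0 := by
        have hmax : IsLocalMax χ t0 := Filter.Eventually.of_forall fun t => by
          rw [hχ1 t0 h1]; exact (hχ01 t).2
        exact hmax.deriv_eq_zero
      rw [this]; ring_nf; exact le_refl 0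
    · rcases lt_or_ge t0 K₂ with h2 | h2
      · have hd := hχ' t0 ⟨h1, h2⟩
        have hb := hρ z (le_of_lt h1) (le_of_lt h2)
        have : H z - ρ * t0 ^ μ ≤ 0 := by
          have := le_abs_self (H z); linarith
        have h4 : (0:ℝ) ≤ -(deriv χ t0 * t0) := by nlinarith
        have h5 : (0:ℝ) ≤ ρ * t0 ^ μ - H z := by linarith
        nlinarith [mul_nonneg h4 h5]
      · have : deriv χ t0 = 0 := by
          have hmin : IsLocalMin χ t0 := Filter.Eventually.of_forall fun t => by
            rw [hχ0 t0 h2]; exact (hχ01 t).1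
          exact hmin.deriv_eq_zero
        rw [this]; ring_nf; exact le_refl 0
  constructor
  · have hX : 0 < χ t0 * H z + (1 - χ t0) * ρ * t0 ^ μ := by
      rcases le_total (H z) (ρ * t0 ^ μ) with h | h
      · nlinarith [mul_nonneg (sub_nonneg.2 hχz.2) (sub_nonneg.2 h)]
      · nlinarith [mul_nonneg hχz.1 (sub_nonneg.2 h)]
    exact mul_pos hμ0 hX
  · -- derivative computation
    set G : EuclideanSpace ℝ (Fin d) × EuclideanSpace ℝ (Fin e) → ℝ :=
      fun w => χ ‖w.1‖ * H w + (1 - χ ‖w.1‖) * ρ * ‖w.1‖ ^ μ with hG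
    set c : ℝ → EuclideanSpace ℝ (Fin d) × EuclideanSpace ℝ (Fin e) :=
      fun t => ((1 + t) • z.1, z.2) with hcdef
    have hc0 : c 0 = z := by
      rw [hcdef]; simp
    have hc : HasDerivAt c (z.1, (0 : EuclideanSpace ℝ (Fin e))) 0 := by
      apply HasDerivAt.prodMk
      · simpa using ((hasDerivAt_id (0:ℝ)).const_add 1).smul_const z.1
      · exact hasDerivAt_const 0 z.2
    have hNd : DifferentiableAt ℝ (fun w : EuclideanSpace ℝ (Fin d) × EuclideanSpace ℝ (Fin e) => ‖w.1‖) z :=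
      ((contDiffAt_norm (𝕜 := ℝ) (n := 1) hz1).differentiableAt one_ne_zero).comp z differentiableAt_fst
    have hχd : DifferentiableAt ℝ χ t0 := (hχ.differentiable (by simp)).differentiableAt
    have hrpd : DifferentiableAt ℝ (fun s : ℝ => s ^ μ) t0 :=
      (Real.hasDerivAt_rpow_const (Or.inl ht0ne)).differentiableAt
    have h1d : DifferentiableAt ℝ (fun w : EuclideanSpace ℝ (Fin d) × EuclideanSpace ℝ (Fin e) => χ ‖w.1‖) z :=
      hχd.comp z hNd
    have hHd : DifferentiableAt ℝ H z := (hH.differentiable one_ne_zero) z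
    have h3d : DifferentiableAt ℝ (fun w : EuclideanSpace ℝ (Fin d) × EuclideanSpace ℝ (Fin e) => ‖w.1‖ ^ μ) z :=
      (hrpd.comp z hNd :)
    have hGdiff : DifferentiableAt ℝ G z :=
      (h1d.mul hHd).add ((((differentiableAt_const 1).sub h1d).mul (differentiableAt_const ρ)).mul h3d)
    -- explicit one-variable function
    set g : ℝ → ℝ := fun t =>
      χ ((1 + t) * t0) * H (c t) + (1 - χ ((1 + t) * t0)) * ρ * ((1 + t) * t0) ^ μ with hgdef
    have hev : (fun t => G (c t)) =ᶠ[nhds (0:ℝ)] g := by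
      have hpos : ∀ᶠ t in nhds (0:ℝ), 0 < 1 + t := by
        have : ∀ᶠ t in nhds (0:ℝ), (-1:ℝ) < t := eventually_gt_nhds (by norm_num)
        filter_upwards [this] with t ht; linarith
      filter_upwards [hpos] with t ht
      have hnorm : ‖((1 + t) • z.1 : EuclideanSpace ℝ (Fin d))‖ = (1 + t) * t0 := by
        rw [norm_smul, Real.norm_eq_abs, abs_of_pos ht, ht0def]
      rw [hG, hgdef, hcdef]
      simp only [hnorm]
    -- derivative of pieces of g
    have hs : HasDerivAt (fun t : ℝ => (1 + t) * t0) t0 0 := by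
      simpa using ((hasDerivAt_id (0:ℝ)).const_add 1).mul_const t0
    have hχc : HasDerivAt (fun t : ℝ => χ ((1 + t) * t0)) (deriv χ t0 * 1 * t0) 0 := by
      have hχt : HasDerivAt χ (deriv χ t0 * 1) ((1 + (0:ℝ)) * t0) := by
        rw [show (1 + (0:ℝ)) * t0 = t0 by ring, mul_one]
        exact hχd.hasDerivAt
      simpa [Function.comp_def] using hχt.comp 0 hs
    have hHc : HasDerivAt (fun t : ℝ => H (c t)) (fderiv ℝ H z (z.1, 0)) 0 :=
      (hHd.hasFDerivAt.comp_hasDerivAt_of_eq 0 hc hc0.symm)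
    have hpc : HasDerivAt (fun t : ℝ => ((1 + t) * t0) ^ μ) (μ * t0 ^ (μ - 1) * t0) 0 := by
      have hrt : HasDerivAt (fun s : ℝ => s ^ μ) (μ * t0 ^ (μ - 1)) ((1 + (0:ℝ)) * t0) := by
        rw [show (1 + (0:ℝ)) * t0 = t0 by ring]
        exact Real.hasDerivAt_rpow_const (Or.inl ht0ne)
      simpa [Function.comp_def] using hrt.comp 0 hs
    have hg : HasDerivAt g
        ((deriv χ t0 * 1 * t0) * H (c 0) + χ ((1 + 0) * t0) * fderiv ℝ H z (z.1, 0)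
          + (((0 - deriv χ t0 * 1 * t0) * ρ) * ((1 + (0:ℝ)) * t0) ^ μ
            + ((1 - χ ((1 + (0:ℝ)) * t0)) * ρ) * (μ * t0 ^ (μ - 1) * t0))) 0 := by
      exact (hχc.mul hHc).add ((((hasDerivAt_const (0:ℝ) (1:ℝ)).sub hχc).mul_const ρ).mul hpc)
    have hμpow : t0 ^ (μ - 1) * t0 = t0 ^ μ := by
      rw [← Real.rpow_add_one ht0ne]; ring_nf
    have hder : fderiv ℝ G z (z.1, 0) =
        deriv χ t0 * t0 * H z + χ t0 * fderiv ℝ H z (z.1, 0)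
          - deriv χ t0 * t0 * (ρ * t0 ^ μ) + (1 - χ t0) * ρ * (μ * t0 ^ μ) := by
      have hcomp : HasDerivAt (fun t => G (c t)) (fderiv ℝ G z (z.1, 0)) 0 :=
        hGdiff.hasFDerivAt.comp_hasDerivAt_of_eq 0 hc hc0.symm
      have e1 : deriv (fun t => G (c t)) 0 = fderiv ℝ G z (z.1, 0) := hcomp.deriv
      have e2 : deriv (fun t => G (c t)) 0 = deriv g 0 := hev.deriv_eq
      have e3 := hg.deriv
      rw [e2, e3] at e1
      rw [← e1, hc0]
      rw [show (1 + (0:ℝ)) * t0 = t0 by ring]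
      rw [mul_assoc μ (t0 ^ (μ - 1)) t0, hμpow]
      ring
    rw [hder]
    have hA2 := hA.2
    nlinarith [mul_nonneg hχz.1 (sub_nonneg.2 hA2)]
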